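/- Assume the insertion setup. If L and K are simple lattices, then M is a simple lattice. -/

import Mathlib

/-!
A congruence `θ ≠ Δ` of `M` collapses some `u < v`, namely the meet and join of two distinct
related elements. Joining with `a` or meeting with `b` moves such a pair into `L` or into
`K = [a, b]` without making it trivial, because `L \ K` and `K \ L` are only comparable through
`a` and `b`. Simplicity of that part forces `a ≡ b`, and since `a, b` lie in both `L` and `K`,
simplicity of both parts then collapses all of `M = L ∪ K`.
-/

/-- A congruence of a lattice: an equivalence relation compatible with `⊔` and `⊓`. -/
structure LatCon (L : Type*) [Lattice L] where
  rel : L → L → Prop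
  refl : ∀ x, rel x x
  symm : ∀ {x y}, rel x y → rel y x
  trans : ∀ {x y z}, rel x y → rel y z → rel x z
  sup : ∀ {x₁ y₁ x₂ y₂}, rel x₁ y₁ → rel x₂ y₂ → rel (x₁ ⊔ x₂) (y₁ ⊔ y₂)
  inf : ∀ {x₁ y₁ x₂ y₂}, rel x₁ y₁ → rel x₂ y₂ → rel (x₁ ⊓ x₂) (y₁ ⊓ y₂)

/-- A lattice is simple if it has at least two elements and its only congruences
are the equality congruence `Δ` and the full congruence `∇`. -/
def IsSimpleLat (L : Type*) [Lattice L] : Prop :=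
  Nontrivial L ∧ ∀ θ : LatCon L, (∀ x y, θ.rel x y ↔ x = y) ∨ (∀ x y, θ.rel x y)

open Set

def Set.Icc.subtypeLatticeHom {α : Type*} [Lattice α] (a b : α) : LatticeHom (Icc a b) α where
  toFun := Subtype.val
  map_sup' _ _ := rfl
  map_inf' _ _ := rfl

namespace LatCon

variable {α β : Type*} [Lattice α] [Lattice β]

def comap (θ : LatCon β) (f : LatticeHom α β) : LatCon α where
  rel x y := θ.rel (f x) (f y)
  refl x := θ.refl (f x)
  symm h := θ.symm h
  trans h₁ h₂ := θ.trans h₁ h₂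
  sup h₁ h₂ := by simpa only [map_sup] using θ.sup h₁ h₂
  inf h₁ h₂ := by simpa only [map_inf] using θ.inf h₁ h₂

theorem exists_rel_ne (θ : LatCon α) (h : ¬∀ x y, θ.rel x y ↔ x = y) :
    ∃ x y, θ.rel x y ∧ x ≠ y := by
  by_contra hnone
  refine h fun x y => ⟨fun hxy => ?_, fun hxy => hxy ▸ θ.refl x⟩
  by_contra hne
  exact hnone ⟨x, y, hxy, hne⟩

theorem rel_inf_sup (θ : LatCon α) {x y : α} (h : θ.rel x y) : θ.rel (x ⊓ y) (x ⊔ y) := by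
  have hinf : θ.rel (x ⊓ y) y := by simpa only [inf_idem] using θ.inf h (θ.refl y)
  have hsup : θ.rel y (x ⊔ y) := by simpa only [sup_idem] using θ.symm (θ.sup h (θ.refl y))
  exact θ.trans hinf hsup

end LatCon

namespace IsSimpleLat

variable {α M : Type*} [Lattice α] [Lattice M]

theorem rel_of_rel_of_ne (hα : IsSimpleLat α) (θ : LatCon α) {x y : α} (hxy : θ.rel x y)
    (hne : x ≠ y) (p q : α) : θ.rel p q :=
  (hα.2 θ).resolve_left (fun hΔ => hne ((hΔ x y).1 hxy)) p q

theorem rel_map_of_rel_map (hα : IsSimpleLat α) (f : LatticeHom α M) (θ : LatCon M)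
    {x y : α} (hxy : θ.rel (f x) (f y)) (hne : x ≠ y) (p q : α) : θ.rel (f p) (f q) :=
  hα.rel_of_rel_of_ne (θ.comap f) hxy hne p q

theorem rel_of_mem_sublattice {L : Sublattice M} (hL : IsSimpleLat L) (θ : LatCon M)
    {x y : M} (hx : x ∈ L) (hy : y ∈ L) (hxy : θ.rel x y) (hne : x ≠ y)
    {p q : M} (hp : p ∈ L) (hq : q ∈ L) : θ.rel p q :=
  hL.rel_map_of_rel_map L.subtype θ (x := ⟨x, hx⟩) (y := ⟨y, hy⟩) hxy
    (fun h => hne (congrArg Subtype.val h)) ⟨p, hp⟩ ⟨q, hq⟩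

theorem rel_of_mem_Icc {a b : M} (hK : IsSimpleLat (Icc a b)) (θ : LatCon M)
    {x y : M} (hx : x ∈ Icc a b) (hy : y ∈ Icc a b) (hxy : θ.rel x y) (hne : x ≠ y)
    {p q : M} (hp : p ∈ Icc a b) (hq : q ∈ Icc a b) : θ.rel p q :=
  hK.rel_map_of_rel_map (Icc.subtypeLatticeHom a b) θ (x := ⟨x, hx⟩) (y := ⟨y, hy⟩) hxy
    (fun h => hne (congrArg Subtype.val h)) ⟨p, hp⟩ ⟨q, hq⟩

end IsSimpleLat

theorem LatCon.exists_rel_ne_of_insertion {M : Type*} [Lattice M] {a b : M}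
    {L : Sublattice M} (θ : LatCon M) (haL : a ∈ L) (hbL : b ∈ L)
    (hUnion : ∀ x : M, x ∈ L ∨ x ∈ Icc a b)
    (hK_le : ∀ k ∈ Icc a b, ∀ l ∈ (L : Set M) \ Icc a b, k ≤ l → k = a ∨ b ≤ l)
    (hle_K : ∀ k ∈ Icc a b, ∀ l ∈ (L : Set M) \ Icc a b, l ≤ k → k = b ∨ l ≤ a)
    {u v : M} (huv : u < v) (h : θ.rel u v) :
    ∃ p q, θ.rel p q ∧ p ≠ q ∧ ((p ∈ L ∧ q ∈ L) ∨ (p ∈ Icc a b ∧ q ∈ Icc a b)) := by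
  rcases hUnion u with huL | huK <;> rcases hUnion v with hvL | hvK
  · exact ⟨u, v, h, huv.ne, .inl ⟨huL, hvL⟩⟩
  · by_cases hvL : v ∈ L
    · exact ⟨u, v, h, huv.ne, .inl ⟨huL, hvL⟩⟩
    by_cases huK : u ∈ Icc a b
    · exact ⟨u, v, h, huv.ne, .inr ⟨huK, hvK⟩⟩
    have hua : u ≤ a := (hle_K v hvK u ⟨huL, huK⟩ huv.le).resolve_left
      (fun hvb => hvL (hvb ▸ hbL))
    have hav : θ.rel a v := by
      simpa only [sup_eq_right.2 hua, sup_eq_left.2 hvK.1] using θ.sup h (θ.refl a)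
    exact ⟨a, v, hav, fun hav => hvL (hav ▸ haL),
      .inr ⟨left_mem_Icc.2 (hvK.1.trans hvK.2), hvK⟩⟩
  · by_cases huL : u ∈ L
    · exact ⟨u, v, h, huv.ne, .inl ⟨huL, hvL⟩⟩
    by_cases hvK : v ∈ Icc a b
    · exact ⟨u, v, h, huv.ne, .inr ⟨huK, hvK⟩⟩
    have hbv : b ≤ v := (hK_le u huK v ⟨hvL, hvK⟩ huv.le).resolve_left
      (fun hua => huL (hua ▸ haL))
    have hub : θ.rel u b := by
      simpa only [inf_eq_left.2 huK.2, inf_eq_right.2 hbv] using θ.inf h (θ.refl b)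
    exact ⟨u, b, hub, fun hub => huL (hub ▸ hbL),
      .inr ⟨huK, right_mem_Icc.2 (huK.1.trans huK.2)⟩⟩
  · exact ⟨u, v, h, huv.ne, .inr ⟨huK, hvK⟩⟩

theorem simple_of_insertion_general {M : Type*} [Lattice M] (a b : M) (L : Sublattice M)
    (hab : a < b) (haL : a ∈ L) (hbL : b ∈ L)
    (hUnion : ∀ x : M, x ∈ L ∨ x ∈ Set.Icc a b)
    (horder : ∀ k ∈ Set.Icc a b, ∀ l ∈ (L : Set M) \ Set.Icc a b,
      (k ≤ l ↔ b ≤ l ∨ (k = a ∧ a ≤ l)) ∧ (l ≤ k ↔ l ≤ a ∨ (k = b ∧ l ≤ b)))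
    (hLsimple : IsSimpleLat ↥L)
    (hKsimple : IsSimpleLat ↥(Set.Icc a b)) :
    IsSimpleLat M := by
  have haK : a ∈ Icc a b := left_mem_Icc.2 hab.le
  have hbK : b ∈ Icc a b := right_mem_Icc.2 hab.le
  refine ⟨⟨a, b, hab.ne⟩, fun θ => or_iff_not_imp_left.2 fun hθ => ?_⟩
  obtain ⟨x, y, hxy, hne⟩ := θ.exists_rel_ne hθ
  have hθab : θ.rel a b := by
    obtain ⟨p, q, hpq, hne, ⟨hp, hq⟩ | ⟨hp, hq⟩⟩ :=
      θ.exists_rel_ne_of_insertion haL hbL hUnion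
        (fun k hk l hl hkl => ((horder k hk l hl).1.1 hkl).symm.imp_left And.left)
        (fun k hk l hl hlk => ((horder k hk l hl).2.1 hlk).symm.imp_left And.left)
        (inf_lt_sup.2 hne) (θ.rel_inf_sup hxy)
    · exact hLsimple.rel_of_mem_sublattice θ hp hq hpq hne haL hbL
    · exact hKsimple.rel_of_mem_Icc θ hp hq hpq hne haK hbK
  have hrel_a : ∀ p, θ.rel p a := fun p => (hUnion p).elim
    (fun hp => hLsimple.rel_of_mem_sublattice θ haL hbL hθab hab.ne hp haL)
    (fun hp => hKsimple.rel_of_mem_Icc θ haK hbK hθab hab.ne hp haK)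
  exact fun p q => θ.trans (hrel_a p) (θ.symm (hrel_a q))

/-- **Corollary.** (Insertion setup:) `M` is a lattice, `a < b` in `M`, `K = [a,b]` is the
interval of `M`, and `L` is a sublattice of `M` with `M = L ∪ K`, `L ∩ K = {a,b}`,
`b` covering `a` in `L`, and the comparabilities between `K` and `L \ K` as described.
If `L` and `K` are simple lattices, then `M` is a simple lattice. -/
theorem simple_of_insertion {M : Type*} [Lattice M] (a b : M) (L : Sublattice M)
    (hab : a < b) (haL : a ∈ L) (hbL : b ∈ L)
    (hUnion : ∀ x : M, x ∈ L ∨ x ∈ Set.Icc a b)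
    (hInter : (L : Set M) ∩ Set.Icc a b = {a, b})
    (hcov : ∀ l ∈ L, ¬(a < l ∧ l < b))
    (horder : ∀ k ∈ Set.Icc a b, ∀ l ∈ (L : Set M) \ Set.Icc a b,
      (k ≤ l ↔ b ≤ l ∨ (k = a ∧ a ≤ l)) ∧ (l ≤ k ↔ l ≤ a ∨ (k = b ∧ l ≤ b)))
    (hLsimple : IsSimpleLat ↥L)
    (hKsimple : IsSimpleLat ↥(Set.Icc a b)) :
    IsSimpleLat M :=
  simple_of_insertion_general a b L hab haL hbL hUnion horder hLsimple hKsimple
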